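/- Let α_1 ∈ (1/2, 1) be irrational and set α = (α_1, 1 − α_1) ∈ ℝ². Then for every N ≥ 2 and every 1 ≤ q ≤ ∞, the two-dimensional Kronecker sequence satisfies 1 ≤ g_N(α, ℤ², ‖·‖_q) ≤ 3. -/

import Mathlib

open scoped BigOperators ENNReal NNReal

/-- Distance from a real number to the nearest integer (the torus norm on ℝ/ℤ). -/
noncomputable def nint (t : ℝ) : ℝ := |t - round t|

/-- The `L_q` distance (for `1 ≤ q ≤ ∞`) between two points of the torus `ℝ^d/ℤ^d`,
computed on representatives in `ℝ^d`. -/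
noncomputable def lqDist (q : ℝ≥0∞) {d : ℕ} (x y : Fin d → ℝ) : ℝ :=
  if q = ⊤ then ⨆ i, nint (x i - y i)
  else (∑ i, nint (x i - y i) ^ q.toReal) ^ (1 / q.toReal)

/-- The `n`-th point of the `d`-dimensional Kronecker sequence `z_n = nα + ℤ^d`
(as a representative in `ℝ^d`). -/
noncomputable def kron {d : ℕ} (α : Fin d → ℝ) (n : ℕ) : Fin d → ℝ :=
  fun c => (n : ℝ) * α c

/-- `L_q`-distance on the torus between the `i`-th and `j`-th points of the
Kronecker sequence of `α`. -/
noncomputable def kronDist (q : ℝ≥0∞) {d : ℕ} (α : Fin d → ℝ) (i j : ℕ) : ℝ :=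
  lqDist q (kron α i) (kron α j)

/-- The index `j ∈ {1, …, N} \ {i}` of the nearest neighbor of `z_i` in
`S_N = {z_1, …, z_N}` w.r.t. the `L_q` torus metric; ties are broken by taking
the largest such index. -/
noncomputable def nnIndex (q : ℝ≥0∞) {d : ℕ} (α : Fin d → ℝ) (N i : ℕ) : ℕ :=
  sSup {j : ℕ | j ∈ Finset.Icc 1 N ∧ j ≠ i ∧
    ∀ m ∈ Finset.Icc 1 N, m ≠ i → kronDist q α i j ≤ kronDist q α i m}

/-- `h_i(N) = |j - i|` where `z_j` is the nearest neighbor of `z_i` in `S_N`: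
the counting-metric distance of `z_i` to its nearest neighbor. -/
noncomputable def hFun (q : ℝ≥0∞) {d : ℕ} (α : Fin d → ℝ) (N i : ℕ) : ℕ :=
  Nat.dist (nnIndex q α N i) i

/-- `g_N(α, ℤ^d, ‖·‖_q)`: the number of distinct nearest neighbor distances
among `d_q(z_i, nn_1(z_i))`, `i = 1, …, N`. -/
noncomputable def gN (q : ℝ≥0∞) {d : ℕ} (α : Fin d → ℝ) (N : ℕ) : ℕ :=
  ((Finset.Icc 1 N).image (fun i => kronDist q α i (nnIndex q α N i))).card

/-- The Gauss map `x ↦ {1/x}` generating the continued fraction expansion. -/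
noncomputable def gaussMap (x : ℝ) : ℝ := Int.fract x⁻¹

/-- The partial quotients of the continued fraction expansion `[0; a_1, a_2, …]`
of an irrational `α ∈ (0,1)`: `a_n = ⌊1 / G^[n-1](α)⌋` (with `a_0 = 0`). -/
noncomputable def cfA (α : ℝ) : ℕ → ℕ
  | 0 => 0
  | n + 1 => (⌊(gaussMap^[n] α)⁻¹⌋).toNat

/-- The denominators of the convergents of the continued fraction of `α`:
`q_0 = 1`, `q_1 = a_1`, `q_n = a_n q_{n-1} + q_{n-2}`. -/
noncomputable def cfQ (α : ℝ) : ℕ → ℕ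
  | 0 => 1
  | 1 => cfA α 1
  | n + 2 => cfA α (n + 2) * cfQ α (n + 1) + cfQ α n

/-!
Both coordinates of `z_i - z_j` are at the same distance `‖(i - j) α₁‖` from `ℤ`, so
`d_q(z_i, z_j) = c_q ‖(i - j) α₁‖` for a constant `c_q > 0`. Since `|i - j|` runs through all of
`[1, M_i]` with `M_i = max (i - 1) (N - i) ∈ [m, 2m]`, `m = ⌊N/2⌋`, the nearest neighbour
distance of `z_i` is `c_q min_{1 ≤ k ≤ M_i} ‖k α₁‖`. This minimum is either the minimum over
`[1, m]` or is attained at a best approximation `k ∈ (m, 2m]` of `α₁`. Best approximations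
`k₁ < k₂ < k₃` satisfy `k₁ + k₂ ≤ k₃` (as the denominators of convergents do), so at most two of
them lie in `(m, 2m]`.
-/

open Finset

lemma nint_eq_norm (t : ℝ) : nint t = ‖(t : UnitAddCircle)‖ := UnitAddCircle.norm_eq.symm

lemma nint_nonneg (t : ℝ) : 0 ≤ nint t := abs_nonneg _

lemma nint_le_abs_sub_intCast (t : ℝ) (m : ℤ) : nint t ≤ |t - m| := round_le t m

lemma nint_neg (t : ℝ) : nint (-t) = nint t := by
  rw [nint_eq_norm, nint_eq_norm, AddCircle.coe_neg, norm_neg]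

lemma nint_add_intCast (t : ℝ) (m : ℤ) : nint (t + m) = nint t := by
  rw [nint, nint, round_add_intCast]; push_cast; ring_nf

lemma nint_natCast_mul_sub_natCast_mul (a : ℝ) (i j : ℕ) :
    nint (i * a - j * a) = nint (Nat.dist i j * a) := by
  rcases le_total j i with h | h
  · rw [Nat.dist_eq_sub_of_le_right h, Nat.cast_sub h, sub_mul]
  · rw [Nat.dist_eq_sub_of_le h, Nat.cast_sub h, ← nint_neg]
    ring_nf

lemma nint_natCast_mul_one_sub (a : ℝ) (i j : ℕ) :
    nint (i * (1 - a) - j * (1 - a)) = nint (i * a - j * a) := by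
  have h : (i : ℝ) * (1 - a) - j * (1 - a) = -(i * a - j * a) + ((i - j : ℤ) : ℝ) := by
    push_cast; ring
  rw [h, nint_add_intCast, nint_neg]

lemma exists_lqDist_eq_mul {d : ℕ} [NeZero d] {q : ℝ≥0∞} (hq : q ≠ 0) :
    ∃ c : ℝ, 0 < c ∧ ∀ (x y : Fin d → ℝ) (s : ℝ), (∀ i, nint (x i - y i) = s) →
      lqDist q x y = c * s := by
  by_cases hT : q = ⊤
  · refine ⟨1, one_pos, fun x y s hs => ?_⟩
    simp only [lqDist, if_pos hT, hs, ciSup_const, one_mul]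
  · have hp : q.toReal ≠ 0 := (ENNReal.toReal_pos hq hT).ne'
    have hd : (0 : ℝ) < d := by simp [Nat.pos_of_neZero d]
    refine ⟨(d : ℝ) ^ (1 / q.toReal), Real.rpow_pos_of_pos hd _, fun x y s hs => ?_⟩
    have hs0 : 0 ≤ s := hs 0 ▸ nint_nonneg _
    simp only [lqDist, if_neg hT, hs, sum_const, card_univ, Fintype.card_fin, nsmul_eq_mul]
    rw [Real.mul_rpow (by positivity) (by positivity), one_div, Real.rpow_rpow_inv hs0 hp]

lemma exists_kronDist_one_sub_eq {q : ℝ≥0∞} (hq : q ≠ 0) (a : ℝ) :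
    ∃ c : ℝ, 0 < c ∧ ∀ i j : ℕ, kronDist q ![a, 1 - a] i j = c * nint (Nat.dist i j * a) := by
  obtain ⟨c, hc, hlq⟩ := exists_lqDist_eq_mul (d := 2) hq
  refine ⟨c, hc, fun i j => hlq _ _ _ fun k => ?_⟩
  fin_cases k
  · exact nint_natCast_mul_sub_natCast_mul a i j
  · exact (nint_natCast_mul_one_sub a i j).trans (nint_natCast_mul_sub_natCast_mul a i j)

section BestApprox

lemma abs_sub_lt_of_mul_nonneg {x y : ℝ} (hxy : 0 ≤ x * y) (hy : 0 < |y|) (hyx : |y| < |x|) :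
    |y - x| < |x| := by
  rcases abs_cases x with ⟨hx, _⟩ | ⟨hx, _⟩ <;> rcases abs_cases y with ⟨hy', _⟩ | ⟨hy', _⟩ <;>
    rw [abs_lt] <;> constructor <;> nlinarith

lemma abs_mul_sub_mul_of_mul_neg {x y : ℝ} (hxy : x * y < 0) {a b : ℝ} (ha : 0 ≤ a) (hb : 0 ≤ b) :
    |a * x - b * y| = a * |x| + b * |y| := by
  rcases mul_neg_iff.mp hxy with ⟨hx, hy⟩ | ⟨hx, hy⟩
  · rw [abs_of_pos hx, abs_of_neg hy, abs_of_nonneg (by nlinarith)]; ring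
  · rw [abs_of_neg hx, abs_of_pos hy, abs_of_nonpos (by nlinarith)]; ring

lemma one_le_of_abs_lt_of_mul_neg {x y z : ℝ} {a b : ℤ} (hxy : x * y < 0) (hyx : |y| < |x|)
    (hzy : |z| < |y|) (hz : z = a * y + b * x) (hab : 0 < a ∨ 0 < b) : 1 ≤ a ∧ 1 ≤ b := by
  by_contra h
  have hcases : (a ≤ 0 ∧ 1 ≤ b) ∨ (1 ≤ a ∧ b ≤ 0) := by omega
  have hcases' : ((a : ℝ) ≤ 0 ∧ 1 ≤ (b : ℝ)) ∨ (1 ≤ (a : ℝ) ∧ (b : ℝ) ≤ 0) := by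
    exact_mod_cast hcases
  rcases mul_neg_iff.mp hxy with ⟨hx, hy⟩ | ⟨hx, hy⟩
  · rw [abs_of_pos hx, abs_of_neg hy] at hyx
    rw [abs_of_neg hy, abs_lt] at hzy
    rcases hcases' with ⟨ha, hb⟩ | ⟨ha, hb⟩ <;> nlinarith
  · rw [abs_of_neg hx, abs_of_pos hy] at hyx
    rw [abs_of_pos hy, abs_lt] at hzy
    rcases hcases' with ⟨ha, hb⟩ | ⟨ha, hb⟩ <;> nlinarith

lemma Int.exists_eq_mul_add_mul_of_abs_det {k₁ p₁ k₂ p₂ : ℤ} (hdet : |k₁ * p₂ - k₂ * p₁| = 1)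
    (j p : ℤ) : ∃ a b : ℤ, j = a * k₂ + b * k₁ ∧ p = a * p₂ + b * p₁ := by
  set e := k₁ * p₂ - k₂ * p₁
  have he : e * e = 1 := by rw [← abs_mul_abs_self, hdet, one_mul]
  exact ⟨e * (k₁ * p - j * p₁), e * (j * p₂ - k₂ * p), by linear_combination -j * he,
    by linear_combination -p * he⟩

lemma exists_nint_natCast_mul_le (α : ℝ) {n : ℕ} (hn : 0 < n) :
    ∃ t : ℕ, 0 < t ∧ t ≤ n ∧ nint (t * α) ≤ 1 / (n + 1) := by
  obtain ⟨j, k, hk0, hkn, hk⟩ := Real.exists_int_int_abs_mul_sub_le α hn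
  lift k to ℕ using hk0.le
  exact ⟨k, by exact_mod_cast hk0, by exact_mod_cast hkn,
    (nint_le_abs_sub_intCast _ j).trans (by exact_mod_cast hk)⟩

variable {α : ℝ} {k₁ k₂ : ℕ} {p₁ p₂ : ℤ}

lemma mul_neg_of_forall_abs_le_nint (hk₁ : 0 < k₁) (h₁₂ : k₁ < k₂)
    (hmin : ∀ t : ℕ, 0 < t → t < k₂ → |k₁ * α - p₁| ≤ nint (t * α))
    (hpos : 0 < |k₂ * α - p₂|) (h₂₁ : |k₂ * α - p₂| < |k₁ * α - p₁|) :
    (k₁ * α - p₁) * (k₂ * α - p₂) < 0 := by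
  by_contra! h
  have hsub := abs_sub_lt_of_mul_nonneg h hpos h₂₁
  have hdiff : ((k₂ - k₁ : ℕ) : ℝ) * α - ((p₂ - p₁ : ℤ) : ℝ) =
      (k₂ * α - p₂) - (k₁ * α - p₁) := by
    push_cast [Nat.cast_sub h₁₂.le]; ring
  have := nint_le_abs_sub_intCast ((k₂ - k₁ : ℕ) * α) (p₂ - p₁)
  rw [hdiff] at this
  linarith [hmin (k₂ - k₁) (by omega) (by omega)]

lemma natCast_mul_abs_le_one_of_forall_abs_le_nint (hk₂ : 1 < k₂)
    (hmin : ∀ t : ℕ, 0 < t → t < k₂ → |k₁ * α - p₁| ≤ nint (t * α)) :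
    k₂ * |k₁ * α - p₁| ≤ 1 := by
  obtain ⟨t, ht0, htn, ht⟩ := exists_nint_natCast_mul_le α (n := k₂ - 1) (by omega)
  have hk : ((k₂ - 1 : ℕ) : ℝ) + 1 = k₂ := by push_cast [Nat.cast_sub hk₂.le]; ring
  rw [hk] at ht
  have := (hmin t ht0 (by omega)).trans ht
  rwa [le_div_iff₀ (by positivity), mul_comm] at this

lemma abs_det_eq_one_of_forall_abs_le_nint (hk₁ : 0 < k₁) (h₁₂ : k₁ < k₂)
    (hmin : ∀ t : ℕ, 0 < t → t < k₂ → |k₁ * α - p₁| ≤ nint (t * α))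
    (hpos : 0 < |k₂ * α - p₂|) (h₂₁ : |k₂ * α - p₂| < |k₁ * α - p₁|) :
    |(k₁ : ℤ) * p₂ - k₂ * p₁| = 1 := by
  set e : ℤ := k₁ * p₂ - k₂ * p₁
  have hdir := natCast_mul_abs_le_one_of_forall_abs_le_nint (by omega) hmin
  have hk : (k₁ : ℝ) < k₂ := by exact_mod_cast h₁₂
  have hk₁' : (0 : ℝ) < k₁ := by exact_mod_cast hk₁
  -- with `xᵢ = kᵢ α - pᵢ`: `|e| = k₂ |x₁| + k₁ |x₂| < 2 k₂ |x₁| ≤ 2`, the last step by Dirichlet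
  have he : |(e : ℝ)| = k₂ * |k₁ * α - p₁| + k₁ * |k₂ * α - p₂| := by
    rw [← abs_mul_sub_mul_of_mul_neg (mul_neg_of_forall_abs_le_nint hk₁ h₁₂ hmin hpos h₂₁)
      (Nat.cast_nonneg k₂) (Nat.cast_nonneg k₁)]
    push_cast [e]; ring_nf
  have hlt : |e| < 2 := by
    have : |(e : ℝ)| < 2 := by rw [he]; nlinarith
    exact_mod_cast this
  have hpos : 0 < |e| := by
    have : 0 < |(e : ℝ)| := by rw [he]; nlinarith
    exact_mod_cast this
  omega

lemma add_le_of_nint_lt {j : ℕ} (hk₁ : 0 < k₁) (h₁₂ : k₁ < k₂)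
    (hmin : ∀ t : ℕ, 0 < t → t < k₂ → nint (k₁ * α) ≤ nint (t * α))
    (h₂₁ : nint (k₂ * α) < nint (k₁ * α)) (hj : 0 < j) (hj₂ : nint (j * α) < nint (k₂ * α)) :
    k₁ + k₂ ≤ j := by
  have hpos : 0 < nint (k₂ * α) := (nint_nonneg _).trans_lt hj₂
  have hsign := mul_neg_of_forall_abs_le_nint hk₁ h₁₂ hmin hpos h₂₁
  -- `(k₂, p₂), (k₁, p₁)` is a basis of `ℤ²`; the coordinates of `(j, p_j)` in it are both
  -- positive because `x_j` is smaller than `x₁` and `x₂`, which have opposite signs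
  obtain ⟨a, b, hj_eq, hp_eq⟩ := Int.exists_eq_mul_add_mul_of_abs_det
    (abs_det_eq_one_of_forall_abs_le_nint hk₁ h₁₂ hmin hpos h₂₁) j (round (j * α))
  have hxj : (j : ℝ) * α - round (j * α) =
      a * (k₂ * α - round (k₂ * α)) + b * (k₁ * α - round (k₁ * α)) := by
    have hjR : (j : ℝ) = a * k₂ + b * k₁ := by exact_mod_cast hj_eq
    have hpR : (round (j * α) : ℝ) = a * round (k₂ * α) + b * round (k₁ * α) := by
      exact_mod_cast hp_eq
    linear_combination α * hjR - hpR
  have hab : 0 < a ∨ 0 < b := by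
    by_contra! h
    nlinarith
  obtain ⟨ha, hb⟩ := one_le_of_abs_lt_of_mul_neg hsign h₂₁ hj₂ hxj hab
  nlinarith

lemma Irrational.nint_natCast_mul_inj (hα : Irrational α) {k l : ℕ} (hk : 0 < k) (hl : 0 < l)
    (h : nint (k * α) = nint (l * α)) : k = l := by
  by_contra hkl
  rcases abs_eq_abs.mp h with h | h
  · have : ((k - l : ℤ) : ℝ) * α = ((round (k * α) - round (l * α) : ℤ) : ℝ) := by
      push_cast; linarith
    exact (hα.intCast_mul (by omega)).ne_int _ this
  · have : ((k + l : ℤ) : ℝ) * α = ((round (k * α) + round (l * α) : ℤ) : ℝ) := by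
      push_cast; linarith
    exact (hα.intCast_mul (by omega)).ne_int _ this

-- best approximation of the second kind
def IsBestApprox (α : ℝ) (k : ℕ) : Prop :=
  ∀ t : ℕ, 0 < t → t < k → nint (k * α) < nint (t * α)

lemma IsBestApprox.add_le {j₁ j₂ j₃ : ℕ} (h₁ : IsBestApprox α j₁) (h₂ : IsBestApprox α j₂)
    (h₃ : IsBestApprox α j₃) (hj₁ : 0 < j₁) (h₁₂ : j₁ < j₂) (h₂₃ : j₂ < j₃) : j₁ + j₂ ≤ j₃ := by
  obtain ⟨k, hk, hkmin⟩ := (Icc 1 (j₂ - 1)).exists_min_image (fun t : ℕ => nint (t * α))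
    ⟨j₁, mem_Icc.mpr (by omega)⟩
  rw [mem_Icc] at hk
  have hjk : j₁ ≤ k := by
    by_contra! h
    exact (h₁ k (by omega) h).not_ge (hkmin j₁ (mem_Icc.mpr (by omega)))
  have := add_le_of_nint_lt (by omega) (by omega)
    (fun t ht₀ ht => hkmin t (mem_Icc.mpr (by omega))) (h₂ k (by omega) (by omega))
    (by omega) (h₃ j₂ (by omega) h₂₃)
  omega

lemma card_filter_isBestApprox_Ioc_le_two (α : ℝ) (m : ℕ) [DecidablePred (IsBestApprox α)] :
    #{k ∈ Ioc m (2 * m) | IsBestApprox α k} ≤ 2 := by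
  by_contra! h
  set S := {k ∈ Ioc m (2 * m) | IsBestApprox α k}
  have hS : ∀ i, S.orderEmbOfCardLe h i ∈ Ioc m (2 * m) ∧ IsBestApprox α (S.orderEmbOfCardLe h i) :=
    fun i => mem_filter.mp (S.orderEmbOfCardLe_mem h i)
  have h₁ := hS 0; have h₂ := hS 1; have h₃ := hS 2
  rw [mem_Ioc] at h₁ h₂ h₃
  have := h₁.2.add_le h₂.2 h₃.2 (by omega) ((S.orderEmbOfCardLe h).strictMono (by decide))
    ((S.orderEmbOfCardLe h).strictMono (by decide))
  omega

lemma isBestApprox_of_isMinOn (hα : Irrational α) {M r : ℕ} (hr : r ∈ Icc 1 M)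
    (hmin : IsMinOn (fun t : ℕ => nint (t * α)) (Icc 1 M : Set ℕ) r) : IsBestApprox α r := by
  rw [mem_Icc] at hr
  intro t ht₀ htr
  refine (isMinOn_iff.mp hmin t (by simp; omega)).lt_of_ne fun h => ?_
  exact htr.ne' (hα.nint_natCast_mul_inj (by omega) ht₀ h)

lemma exists_card_le_three_of_isMinOn (hα : Irrational α) {m : ℕ} (hm : 0 < m) :
    ∃ T : Finset ℝ, #T ≤ 3 ∧ ∀ M r : ℕ, m ≤ M → M ≤ 2 * m → r ∈ Icc 1 M →
      IsMinOn (fun t : ℕ => nint (t * α)) (Icc 1 M : Set ℕ) r → nint (r * α) ∈ T := by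
  classical
  obtain ⟨r₀, hr₀, hr₀min⟩ := (Icc 1 m).exists_min_image (fun t : ℕ => nint (t * α))
    ⟨1, mem_Icc.mpr ⟨le_rfl, hm⟩⟩
  refine ⟨insert (nint (r₀ * α))
    ({k ∈ Ioc m (2 * m) | IsBestApprox α k}.image fun t : ℕ => nint (t * α)), ?_, ?_⟩
  · exact card_insert_le _ _ |>.trans
      (Nat.add_le_add_right (card_image_le.trans (card_filter_isBestApprox_Ioc_le_two α m)) 1)
  intro M r hmM hM hr hrmin
  rw [mem_Icc] at hr₀
  by_cases hrm : r ≤ m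
  · have hr₀r : nint (r * α) = nint (r₀ * α) :=
      le_antisymm (isMinOn_iff.mp hrmin r₀ (by simp; omega))
        (hr₀min r (mem_Icc.mpr ⟨(mem_Icc.mp hr).1, hrm⟩))
    rw [hr₀r]
    exact mem_insert_self _ _
  · refine mem_insert_of_mem (mem_image_of_mem _ (mem_filter.mpr ⟨?_, ?_⟩))
    · rw [mem_Icc] at hr; rw [mem_Ioc]; omega
    · exact isBestApprox_of_isMinOn hα hr hrmin

end BestApprox

lemma nnIndex_spec {d : ℕ} (q : ℝ≥0∞) (α : Fin d → ℝ) {N : ℕ} (i : ℕ) (hN : 2 ≤ N) :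
    nnIndex q α N i ∈ Icc 1 N ∧ nnIndex q α N i ≠ i ∧
      ∀ m ∈ Icc 1 N, m ≠ i → kronDist q α i (nnIndex q α N i) ≤ kronDist q α i m := by
  obtain ⟨w, hw, hwmin⟩ := ((Icc 1 N).erase i).exists_min_image (kronDist q α i)
    ⟨if i = 1 then 2 else 1, by rw [mem_erase, mem_Icc]; split_ifs <;> omega⟩
  rw [mem_erase] at hw
  unfold nnIndex
  exact Nat.sSup_mem (s := {j | j ∈ Icc 1 N ∧ j ≠ i ∧
      ∀ m ∈ Icc 1 N, m ≠ i → kronDist q α i j ≤ kronDist q α i m})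
    ⟨w, hw.2, hw.1, fun m hm hmi => hwmin m (mem_erase.mpr ⟨hmi, hm⟩)⟩
    ⟨N, fun j hj => (mem_Icc.mp hj.1).2⟩

lemma Nat.dist_mem_Icc_max_sub {N i w : ℕ} (hi : i ∈ Icc 1 N) (hw : w ∈ Icc 1 N) (hwi : w ≠ i) :
    Nat.dist i w ∈ Icc 1 (max (i - 1) (N - i)) := by
  rw [mem_Icc] at hi hw ⊢
  simp only [Nat.dist]
  omega

lemma Nat.exists_dist_eq_of_mem_Icc_max_sub {N i t : ℕ} (hi : i ∈ Icc 1 N)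
    (ht : t ∈ Icc 1 (max (i - 1) (N - i))) : ∃ w ∈ Icc 1 N, w ≠ i ∧ Nat.dist i w = t := by
  rw [mem_Icc] at hi ht
  rcases le_or_gt t (i - 1) with h | h
  · exact ⟨i - t, mem_Icc.mpr (by omega), by omega, by simp only [Nat.dist]; omega⟩
  · exact ⟨i + t, mem_Icc.mpr (by omega), by omega, by simp only [Nat.dist]; omega⟩

lemma exists_isMinOn_of_kronDist_eq {d : ℕ} {q : ℝ≥0∞} {α : Fin d → ℝ} {f : ℕ → ℝ}
    (hf : ∀ i j, kronDist q α i j = f (Nat.dist i j)) {N i : ℕ} (hN : 2 ≤ N)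
    (hi : i ∈ Icc 1 N) :
    ∃ r ∈ Icc 1 (max (i - 1) (N - i)), IsMinOn f (Icc 1 (max (i - 1) (N - i)) : Set ℕ) r ∧
      kronDist q α i (nnIndex q α N i) = f r := by
  obtain ⟨hn, hni, hnmin⟩ := nnIndex_spec q α i hN
  refine ⟨_, Nat.dist_mem_Icc_max_sub hi hn hni, isMinOn_iff.mpr fun t ht => ?_, hf _ _⟩
  obtain ⟨w, hw, hwi, rfl⟩ := Nat.exists_dist_eq_of_mem_Icc_max_sub hi (mem_coe.mp ht)
  simpa only [hf] using hnmin w hw hwi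

theorem statement2_general (α1 : ℝ) (hirr : Irrational α1)
    (N : ℕ) (hN : 2 ≤ N) (q : ℝ≥0∞) (hq : 1 ≤ q) :
    1 ≤ gN q ![α1, 1 - α1] N ∧ gN q ![α1, 1 - α1] N ≤ 3 := by
  obtain ⟨c, hc, hdist⟩ := exists_kronDist_one_sub_eq (zero_lt_one.trans_le hq).ne' α1
  obtain ⟨T, hTcard, hT⟩ := exists_card_le_three_of_isMinOn hirr (m := N / 2) (by omega)
  refine ⟨card_pos.mpr ((nonempty_Icc.mpr (by omega)).image _), ?_⟩
  refine (card_le_card (t := T.image (c * ·)) (image_subset_iff.mpr fun i hi => ?_)).trans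
    (card_image_le.trans hTcard)
  obtain ⟨r, hr, hrmin, hnn⟩ :=
    exists_isMinOn_of_kronDist_eq (f := fun k => c * nint (k * α1)) hdist hN hi
  rw [hnn]
  have hi' := mem_Icc.mp hi
  refine mem_image_of_mem _ (hT _ r (by omega) (by omega) hr (isMinOn_iff.mpr fun t ht => ?_))
  exact le_of_mul_le_mul_left (isMinOn_iff.mp hrmin t ht) hc

/-- For irrational `α_1 ∈ (1/2, 1)` and `α = (α_1, 1 - α_1)`, for every
`N ≥ 2` and `1 ≤ q ≤ ∞`, `1 ≤ g_N(α, ℤ², ‖·‖_q) ≤ 3`. -/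
theorem statement2 (α1 : ℝ) (hmem : α1 ∈ Set.Ioo (1/2 : ℝ) 1) (hirr : Irrational α1)
    (N : ℕ) (hN : 2 ≤ N) (q : ℝ≥0∞) (hq : 1 ≤ q) :
    1 ≤ gN q ![α1, 1 - α1] N ∧ gN q ![α1, 1 - α1] N ≤ 3 :=
  statement2_general α1 hirr N hN q hq
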